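/- arXiv:2109.12679 — 2 statements merged into one kernel-verified Lean document; each statement's English description precedes it below -/
import Mathlib

section
/- Let Σ and Σ̄ be positive-definite real n×n matrices. The Kullback–Leibler divergence between the centered multivariate Gaussian measures N(0, Σ) and N(0, Σ̄) on ℝⁿ equals (1/2) * (Real.log Σ̄.det − Real.log Σ.det + (Σ̄⁻¹ * Σ).trace − n). -/
open MeasureTheory
open scoped BigOperators Matrix

/-- The centered multivariate Gaussian measure `N(0, S)` on `Fin n → ℝ` with
positive-definite covariance matrix `S`, defined by its density with respect to
the Lebesgue measure. -/
noncomputable def multivariateGaussian {n : ℕ} (S : Matrix (Fin n) (Fin n) ℝ) :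
    Measure (Fin n → ℝ) :=
  volume.withDensity fun x =>
    ENNReal.ofReal (Real.sqrt (((2 * Real.pi) ^ n * S.det)⁻¹) *
      Real.exp (-(1 / 2) * (x ⬝ᵥ (S⁻¹ *ᵥ x))))

/-- The Kullback–Leibler divergence `KL(μ ‖ ν) = ∫ log (dμ/dν) dμ`. -/
noncomputable def klDiv {α : Type*} [MeasurableSpace α] (μ ν : Measure α) : ℝ :=
  ∫ x, MeasureTheory.llr μ ν x ∂μ

/-!
Write `S = R Rᵀ` with `R` invertible (e.g. `R = √S`). The change of variables `x = R y` turns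
the density of `N(0, S)` into the product of one-dimensional standard Gaussian densities, so
`N(0, S)` is the law of `R Z` for `Z` with independent standard Gaussian coordinates. Hence
`E[xᵀ A x] = E[Zᵀ (Rᵀ A R) Z] = tr (Rᵀ A R) = tr (A S)`. The log-likelihood ratio of two
centered Gaussians is a constant plus the quadratic form of `Sbar⁻¹ - S⁻¹`, whose expectation
under `N(0, S)` is `tr (Sbar⁻¹ S) - n`.
-/

open scoped ENNReal
open ProbabilityTheory Matrix

namespace MeasureTheory

theorem lintegral_fin_nat_prod_eq_prod {n : ℕ} {E : Type*} {mE : MeasurableSpace E}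
    {μ : Fin n → Measure E} [∀ i, SigmaFinite (μ i)] {f : Fin n → E → ℝ≥0∞}
    (hf : ∀ i, Measurable (f i)) :
    ∫⁻ x, ∏ i, f i (x i) ∂(Measure.pi μ) = ∏ i, ∫⁻ x, f i x ∂(μ i) := by
  induction n with
  | zero => simp
  | succ n ih =>
    rw [← ((measurePreserving_piFinSuccAbove μ 0).symm).lintegral_comp_emb
      (MeasurableEquiv.measurableEmbedding _)]
    simp_rw [MeasurableEquiv.piFinSuccAbove_symm_apply, Fin.insertNthEquiv,
      Fin.prod_univ_succ, Fin.insertNth_zero, Equiv.coe_fn_mk, Fin.cons_succ,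
      Fin.zero_succAbove, cast_eq, Fin.cons_zero]
    rw [← ih fun i : Fin n => hf i.succ]
    exact lintegral_prod_mul (hf 0).aemeasurable
      (Finset.measurable_prod _ fun (i : Fin n) _ =>
        (hf i.succ).comp (measurable_pi_apply i)).aemeasurable

theorem Measure.pi_withDensity {n : ℕ} {E : Type*} {mE : MeasurableSpace E}
    (μ : Fin n → Measure E) [∀ i, SigmaFinite (μ i)] {f : Fin n → E → ℝ≥0∞}
    (hf : ∀ i, Measurable (f i)) [∀ i, SigmaFinite ((μ i).withDensity (f i))] :
    Measure.pi (fun i => (μ i).withDensity (f i))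
      = (Measure.pi μ).withDensity fun x => ∏ i, f i (x i) := by
  refine Measure.pi_eq fun s hs => ?_
  rw [withDensity_apply _ (MeasurableSet.univ_pi hs), Measure.restrict_pi_pi,
    lintegral_fin_nat_prod_eq_prod hf]
  exact Finset.prod_congr rfl fun i _ => (withDensity_apply _ (hs i)).symm

theorem _root_.MeasurableEquiv.map_withDensity {α β : Type*} [MeasurableSpace α]
    [MeasurableSpace β] (e : α ≃ᵐ β) (μ : Measure α) (f : α → ℝ≥0∞) :
    (μ.withDensity f).map e = (μ.map e).withDensity (f ∘ e.symm) := by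
  ext s hs
  rw [Measure.map_apply e.measurable hs, withDensity_apply _ (e.measurable hs),
    withDensity_apply _ hs, e.restrict_map, lintegral_map_equiv]
  simp

lemma llr_withDensity_ofReal {α : Type*} [MeasurableSpace α] {ρ : Measure α} [SigmaFinite ρ]
    {f g : α → ℝ} (hf : Measurable f) (hg : Measurable g) (hf0 : ∀ x, 0 < f x)
    (hg0 : ∀ x, 0 < g x) :
    llr (ρ.withDensity fun x => ENNReal.ofReal (f x))
        (ρ.withDensity fun x => ENNReal.ofReal (g x))
      =ᵐ[ρ] fun x => Real.log (f x) - Real.log (g x) := by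
  have : SigmaFinite (ρ.withDensity fun x => ENNReal.ofReal (f x)) :=
    SigmaFinite.withDensity_of_ne_top' fun _ => ENNReal.ofReal_ne_top
  have hright := Measure.rnDeriv_withDensity_right
    (ρ.withDensity fun x => ENNReal.ofReal (f x)) ρ hg.ennreal_ofReal.aemeasurable
    (ae_of_all _ fun x => (ENNReal.ofReal_pos.2 (hg0 x)).ne')
    (ae_of_all _ fun _ => ENNReal.ofReal_ne_top)
  filter_upwards [hright, Measure.rnDeriv_withDensity ρ hf.ennreal_ofReal] with x hx hx'
  simp only [llr_def]
  rw [hx, hx', ENNReal.toReal_mul, ENNReal.toReal_inv, ENNReal.toReal_ofReal (hf0 x).le,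
    ENNReal.toReal_ofReal (hg0 x).le, Real.log_mul (inv_pos.2 (hg0 x)).ne' (hf0 x).ne',
    Real.log_inv]
  ring

end MeasureTheory

lemma Real.sqrt_pow {x : ℝ} (hx : 0 ≤ x) (m : ℕ) : √(x ^ m) = √x ^ m := by
  rw [Real.sqrt_eq_rpow, Real.sqrt_eq_rpow, ← Real.rpow_natCast_mul hx, mul_comm,
    Real.rpow_mul_natCast hx]

namespace Matrix

variable {ι α : Type*} [Fintype ι] [CommRing α]

lemma dotProduct_mulVec_eq_sum (M : Matrix ι ι α) (y : ι → α) :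
    y ⬝ᵥ M *ᵥ y = ∑ i, ∑ j, M i j * (y i * y j) := by
  simp only [dotProduct, mulVec, Finset.mul_sum]
  exact Finset.sum_congr rfl fun i _ => Finset.sum_congr rfl fun j _ => by ring

lemma dotProduct_mulVec_mulVec (R A : Matrix ι ι α) (y : ι → α) :
    (R *ᵥ y) ⬝ᵥ A *ᵥ (R *ᵥ y) = y ⬝ᵥ (Rᵀ * A * R) *ᵥ y := by
  rw [← mulVec_mulVec, ← mulVec_mulVec, dotProduct_mulVec y Rᵀ, vecMul_transpose]

lemma transpose_mul_inv_mul_transpose_mul_eq_one [DecidableEq ι] {R : Matrix ι ι α}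
    (hR : IsUnit R.det) : Rᵀ * (R * Rᵀ)⁻¹ * R = 1 := by
  have hRt : IsUnit Rᵀ.det := by rwa [det_transpose]
  rw [Matrix.mul_inv_rev, ← Matrix.mul_assoc, mul_nonsing_inv _ hRt, Matrix.one_mul,
    nonsing_inv_mul _ hR]

open scoped MatrixOrder in
lemma PosDef.exists_mul_transpose_eq [DecidableEq ι] {S : Matrix ι ι ℝ} (hS : S.PosDef) :
    ∃ R : Matrix ι ι ℝ, IsUnit R.det ∧ R * Rᵀ = S := by
  have hRR : CFC.sqrt S * (CFC.sqrt S)ᵀ = S := by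
    rw [← conjTranspose_eq_transpose_of_trivial, (CFC.sqrt_nonneg S).posSemidef.1.eq,
      CFC.sqrt_mul_sqrt_self S hS.posSemidef.nonneg]
  refine ⟨CFC.sqrt S, isUnit_iff_ne_zero.2 fun h0 => hS.det_pos.ne' ?_, hRR⟩
  rw [← hRR, det_mul, h0, zero_mul]

end Matrix

section StandardGaussianPi

variable {ι : Type*} [Fintype ι]

lemma memLp_eval_pi_gaussianReal (i : ι) :
    MemLp (fun y : ι → ℝ => y i) 2 (Measure.pi fun _ => gaussianReal 0 1) :=
  (memLp_id_gaussianReal 2).comp_measurePreserving (measurePreserving_eval _ i)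

lemma integrable_eval_mul_eval_pi_gaussianReal (i j : ι) :
    Integrable (fun y : ι → ℝ => y i * y j) (Measure.pi fun _ => gaussianReal 0 1) :=
  (memLp_eval_pi_gaussianReal i).integrable_mul (memLp_eval_pi_gaussianReal j)

lemma integral_eval_mul_eval_pi_gaussianReal [DecidableEq ι] (i j : ι) :
    ∫ y : ι → ℝ, y i * y j ∂(Measure.pi fun _ => gaussianReal 0 1)
      = (1 : Matrix ι ι ℝ) i j := by
  by_cases hij : i = j
  · subst hij
    have hvar := variance_fun_id_gaussianReal (μ := 0) (v := 1)
    rw [variance_of_integral_eq_zero aemeasurable_id' integral_id_gaussianReal] at hvar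
    rw [one_apply_eq, integral_comp_eval (f := fun t => t * t) (by fun_prop)]
    simpa [sq] using hvar
  · rw [one_apply_ne hij,
      ((iIndepFun_pi fun _ => aemeasurable_id).indepFun hij).integral_fun_mul_eq_mul_integral
        (memLp_eval_pi_gaussianReal i).1 (memLp_eval_pi_gaussianReal j).1]
    simp [integral_eval, integral_id_gaussianReal]

lemma integrable_dotProduct_mulVec_pi_gaussianReal (M : Matrix ι ι ℝ) :
    Integrable (fun y => y ⬝ᵥ M *ᵥ y) (Measure.pi fun _ => gaussianReal 0 1) := by
  simp_rw [Matrix.dotProduct_mulVec_eq_sum]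
  exact integrable_finsetSum _ fun i _ => integrable_finsetSum _ fun j _ =>
    (integrable_eval_mul_eval_pi_gaussianReal i j).const_mul _

lemma integral_dotProduct_mulVec_pi_gaussianReal [DecidableEq ι] (M : Matrix ι ι ℝ) :
    ∫ y, y ⬝ᵥ M *ᵥ y ∂(Measure.pi fun _ => gaussianReal 0 1) = M.trace := by
  have hint (i j : ι) := (integrable_eval_mul_eval_pi_gaussianReal i j).const_mul (M i j)
  simp_rw [Matrix.dotProduct_mulVec_eq_sum]
  rw [integral_finsetSum _ fun i _ => integrable_finsetSum _ fun j _ => hint i j]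
  simp_rw [integral_finsetSum _ fun j _ => hint _ j, integral_const_mul,
    integral_eval_mul_eval_pi_gaussianReal]
  simp [Matrix.trace, one_apply]

end StandardGaussianPi

section MultivariateGaussian

variable {n : ℕ}

noncomputable def multivariateGaussianPDFReal (S : Matrix (Fin n) (Fin n) ℝ) (x : Fin n → ℝ) :
    ℝ :=
  Real.sqrt (((2 * Real.pi) ^ n * S.det)⁻¹) * Real.exp (-(1 / 2) * (x ⬝ᵥ (S⁻¹ *ᵥ x)))

lemma multivariateGaussian_eq_withDensity (S : Matrix (Fin n) (Fin n) ℝ) :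
    multivariateGaussian S
      = volume.withDensity fun x => ENNReal.ofReal (multivariateGaussianPDFReal S x) := rfl

lemma measurable_multivariateGaussianPDFReal (S : Matrix (Fin n) (Fin n) ℝ) :
    Measurable (multivariateGaussianPDFReal S) := by
  unfold multivariateGaussianPDFReal
  fun_prop

lemma multivariateGaussianPDFReal_pos {S : Matrix (Fin n) (Fin n) ℝ} (hS : 0 < S.det)
    (x : Fin n → ℝ) : 0 < multivariateGaussianPDFReal S x := by
  unfold multivariateGaussianPDFReal
  positivity

lemma log_multivariateGaussianPDFReal {S : Matrix (Fin n) (Fin n) ℝ} (hS : 0 < S.det)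
    (x : Fin n → ℝ) :
    Real.log (multivariateGaussianPDFReal S x)
      = -(1 / 2) * (n * Real.log (2 * Real.pi) + Real.log S.det)
          - 1 / 2 * (x ⬝ᵥ S⁻¹ *ᵥ x) := by
  rw [multivariateGaussianPDFReal, Real.log_mul (by positivity) (Real.exp_ne_zero _),
    Real.log_exp, Real.log_sqrt (by positivity), Real.log_inv,
    Real.log_mul (by positivity) hS.ne', Real.log_pow]
  ring

lemma multivariateGaussianPDFReal_mul_transpose {R : Matrix (Fin n) (Fin n) ℝ}
    (hR : IsUnit R.det) (y : Fin n → ℝ) :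
    multivariateGaussianPDFReal (R * Rᵀ) (R *ᵥ y)
      = |R.det|⁻¹ * multivariateGaussianPDFReal 1 y := by
  simp only [multivariateGaussianPDFReal, dotProduct_mulVec_mulVec,
    transpose_mul_inv_mul_transpose_mul_eq_one hR, det_mul, det_transpose, det_one, inv_one,
    mul_one]
  rw [Real.sqrt_inv, Real.sqrt_inv, Real.sqrt_mul (by positivity), Real.sqrt_mul_self_eq_abs]
  ring

lemma multivariateGaussian_one :
    multivariateGaussian (1 : Matrix (Fin n) (Fin n) ℝ)
      = Measure.pi fun _ => gaussianReal 0 1 := by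
  have : SigmaFinite (volume.withDensity (gaussianPDF 0 1)) := by
    rw [← gaussianReal_of_var_ne_zero 0 one_ne_zero]; infer_instance
  simp_rw [gaussianReal_of_var_ne_zero 0 one_ne_zero]
  rw [Measure.pi_withDensity _ fun _ => measurable_gaussianPDF 0 1, ← volume_pi,
    multivariateGaussian_eq_withDensity]
  congr 1
  funext x
  rw [gaussianPDF_def,
    ← ENNReal.ofReal_prod_of_nonneg fun i _ => gaussianPDFReal_nonneg 0 1 (x i)]
  congr 1
  simp only [multivariateGaussianPDFReal, gaussianPDFReal_def, Finset.prod_mul_distrib,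
    ← Real.exp_sum, det_one, inv_one, one_mulVec, mul_one, sub_zero, NNReal.coe_one,
    Finset.prod_const, Finset.card_univ, Fintype.card_fin, dotProduct, Finset.mul_sum]
  congr 1
  · rw [Real.sqrt_inv, inv_pow, Real.sqrt_pow (by positivity)]
  · exact congrArg Real.exp (Finset.sum_congr rfl fun i _ => by ring)

lemma multivariateGaussian_mul_transpose {R : Matrix (Fin n) (Fin n) ℝ} (hR : IsUnit R.det) :
    multivariateGaussian (R * Rᵀ) = (Measure.pi fun _ => gaussianReal 0 1).map (R *ᵥ ·) := by
  rw [← multivariateGaussian_one]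
  have : Invertible R := R.invertibleOfIsUnitDet hR
  let e : (Fin n → ℝ) ≃ᵐ (Fin n → ℝ) :=
    (R.toLinearEquiv' this).toContinuousLinearEquiv.toHomeomorph.toMeasurableEquiv
  have he : ⇑e = (R *ᵥ ·) := rfl
  have hvol : volume.map e = ENNReal.ofReal |R.det|⁻¹ • volume := by
    rw [← abs_inv]; exact Real.map_matrix_volume_pi_eq_smul_volume_pi hR.ne_zero
  rw [multivariateGaussian_eq_withDensity 1, ← he, e.map_withDensity, hvol,
    withDensity_smul_measure, ← withDensity_smul _
      ((measurable_multivariateGaussianPDFReal 1).ennreal_ofReal.comp e.symm.measurable),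
    multivariateGaussian_eq_withDensity]
  congr 1
  funext x
  obtain ⟨y, rfl⟩ := e.surjective x
  rw [Pi.smul_apply, Function.comp_apply, e.symm_apply_apply, he,
    multivariateGaussianPDFReal_mul_transpose hR, ENNReal.ofReal_mul (by positivity), smul_eq_mul]

lemma isProbabilityMeasure_multivariateGaussian {S : Matrix (Fin n) (Fin n) ℝ}
    (hS : S.PosDef) :
    IsProbabilityMeasure (multivariateGaussian S) := by
  obtain ⟨R, hR, rfl⟩ := hS.exists_mul_transpose_eq
  rw [multivariateGaussian_mul_transpose hR]
  exact Measure.isProbabilityMeasure_map (by fun_prop)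

lemma integrable_dotProduct_mulVec_multivariateGaussian {S : Matrix (Fin n) (Fin n) ℝ}
    (hS : S.PosDef) (A : Matrix (Fin n) (Fin n) ℝ) :
    Integrable (fun x => x ⬝ᵥ A *ᵥ x) (multivariateGaussian S) := by
  obtain ⟨R, hR, rfl⟩ := hS.exists_mul_transpose_eq
  rw [multivariateGaussian_mul_transpose hR, integrable_map_measure (by fun_prop) (by fun_prop)]
  simpa only [Function.comp_def, dotProduct_mulVec_mulVec]
    using integrable_dotProduct_mulVec_pi_gaussianReal (Rᵀ * A * R)

lemma integral_dotProduct_mulVec_multivariateGaussian {S : Matrix (Fin n) (Fin n) ℝ}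
    (hS : S.PosDef) (A : Matrix (Fin n) (Fin n) ℝ) :
    ∫ x, x ⬝ᵥ A *ᵥ x ∂(multivariateGaussian S) = (A * S).trace := by
  obtain ⟨R, hR, rfl⟩ := hS.exists_mul_transpose_eq
  rw [multivariateGaussian_mul_transpose hR, integral_map (by fun_prop) (by fun_prop)]
  simp_rw [dotProduct_mulVec_mulVec]
  rw [integral_dotProduct_mulVec_pi_gaussianReal, trace_mul_comm, ← Matrix.mul_assoc,
    trace_mul_comm]

lemma llr_multivariateGaussian {S T : Matrix (Fin n) (Fin n) ℝ} (hS : S.PosDef)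
    (hT : T.PosDef) :
    llr (multivariateGaussian S) (multivariateGaussian T) =ᵐ[multivariateGaussian S] fun x =>
      1 / 2 * (Real.log T.det - Real.log S.det) + 1 / 2 * (x ⬝ᵥ (T⁻¹ - S⁻¹) *ᵥ x) := by
  refine (withDensity_absolutelyContinuous _ _).ae_le ?_
  filter_upwards [llr_withDensity_ofReal (measurable_multivariateGaussianPDFReal S)
    (measurable_multivariateGaussianPDFReal T) (multivariateGaussianPDFReal_pos hS.det_pos)
    (multivariateGaussianPDFReal_pos hT.det_pos)] with x hx
  rw [multivariateGaussian_eq_withDensity, multivariateGaussian_eq_withDensity, hx,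
    log_multivariateGaussianPDFReal hS.det_pos, log_multivariateGaussianPDFReal hT.det_pos,
    sub_mulVec, dotProduct_sub]
  ring

end MultivariateGaussian

/-- **KL divergence between centered multivariate Gaussians.** For positive-definite
covariance matrices `S` and `Sbar`,
`KL(N(0,S) ‖ N(0,Sbar)) = (1/2) (log det Sbar - log det S + tr (Sbar⁻¹ S) - n)`. -/
theorem klDiv_multivariateGaussian {n : ℕ}
    (S Sbar : Matrix (Fin n) (Fin n) ℝ) (hS : S.PosDef) (hSbar : Sbar.PosDef) :
    klDiv (multivariateGaussian S) (multivariateGaussian Sbar)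
      = (1 / 2 : ℝ) * (Real.log Sbar.det - Real.log S.det
          + (Sbar⁻¹ * S).trace - n) := by
  have := isProbabilityMeasure_multivariateGaussian hS
  rw [klDiv, integral_congr_ae (llr_multivariateGaussian hS hSbar),
    integral_add (integrable_const _)
      ((integrable_dotProduct_mulVec_multivariateGaussian hS _).const_mul _),
    integral_const, integral_const_mul, integral_dotProduct_mulVec_multivariateGaussian hS,
    Matrix.sub_mul, trace_sub, nonsing_inv_mul _ (isUnit_iff_ne_zero.2 hS.det_pos.ne'),
    trace_one]
  simp only [probReal_univ, smul_eq_mul, one_mul, Fintype.card_fin]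
  ring
end

section
/- Suppose coordinate j is mixed: there is a measurable set A ⊆ Ω with 0 < ℙ(A) < 1 such that for a.e. ω ∈ A the coordinate is passive (μ (X ω) j = 0 and σ (X ω) j = 1), for a.e. ω ∈ Aᶜ it is active (σ (X ω) j = 0), and ε is independent of the pair (X, 1_A). Then with c := ℙ(A).toReal, the law of Z_j is the mixture Measure.map (fun ω => Z ω j) ℙ = ℙ(A) • gaussianReal 0 1 + ℙ(Aᶜ) • Measure.map (fun ω => μ (X ω) j) (ℙ conditioned on Aᶜ), i.e. p(z_j) = c·p(ε_j) + (1−c)·p(μ_j restricted to the active regime) with 0 < c < 1. -/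
open MeasureTheory ProbabilityTheory

/-- **A mixed coordinate of the sampled representation has a mixture law.**
Suppose coordinate `j` is mixed: there is a measurable set `A` with `0 < P A < 1`
such that for a.e. `ω ∈ A` the coordinate is passive (`μ (X ω) j = 0` and
`σ (X ω) j = 1`), for a.e. `ω ∈ Aᶜ` it is active (`σ (X ω) j = 0`), and `ε` is
independent of the pair `(X, 1_A)`. Then, with `c := (P A).toReal ∈ (0, 1)`, the
law of `Z ω j` is the mixture
`P A • gaussianReal 0 1 + P Aᶜ • (law of μ (X ·) j under P conditioned on Aᶜ)`,
i.e. `p(z_j) = c · p(ε_j) + (1 - c) · p(μ_j | active regime)`. -/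
theorem law_mixed_coordinate_eq_mixture
    {Ω E : Type*} [MeasurableSpace Ω] [MeasurableSpace E]
    (P : Measure Ω) [IsProbabilityMeasure P] {n : ℕ}
    (X : Ω → E) (hX : Measurable X)
    (μ σ : E → Fin n → ℝ) (hμ : Measurable μ) (hσ : Measurable σ)
    (ε : Ω → Fin n → ℝ) (hε : Measurable ε)
    (hε_law : Measure.map ε P = Measure.pi fun _ => gaussianReal 0 1)
    (Z : Ω → Fin n → ℝ)
    (hZ : Z = fun ω j => μ (X ω) j + Real.sqrt (σ (X ω) j) * ε ω j)
    (j : Fin n)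
    (A : Set Ω) (hA : MeasurableSet A) (hA_pos : 0 < P A) (hA_lt : P A < 1)
    (h_passive : ∀ᵐ ω ∂P.restrict A, μ (X ω) j = 0 ∧ σ (X ω) j = 1)
    (h_active : ∀ᵐ ω ∂P.restrict Aᶜ, σ (X ω) j = 0)
    (h_indep : IndepFun (fun ω => (X ω, A.indicator (fun _ => (1 : ℝ)) ω)) ε P) :
    Measure.map (fun ω => Z ω j) P
        = P A • gaussianReal 0 1
          + P Aᶜ • Measure.map (fun ω => μ (X ω) j) ((P Aᶜ)⁻¹ • P.restrict Aᶜ)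
      ∧ 0 < (P A).toReal ∧ (P A).toReal < 1 := by
  have hPA_ne_top : P A ≠ ⊤ := measure_ne_top P A
  have hPAc_ne_top : P Aᶜ ≠ ⊤ := measure_ne_top P Aᶜ
  have hPAc_pos : 0 < P Aᶜ := by
    rw [prob_compl_eq_one_sub hA]
    exact tsub_pos_of_lt hA_lt
  have hμj : Measurable fun ω => μ (X ω) j := (measurable_pi_apply j).comp (hμ.comp hX)
  have hσj : Measurable fun ω => σ (X ω) j := (measurable_pi_apply j).comp (hσ.comp hX)
  have hεj : Measurable fun ω => ε ω j := (measurable_pi_apply j).comp hε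
  have hZj : Measurable fun ω => Z ω j := by
    subst hZ
    exact hμj.add ((hσj.sqrt).mul hεj)
  -- law of ε j is the standard gaussian
  have hεj_law : Measure.map (fun ω => ε ω j) P = gaussianReal 0 1 := by
    have h1 : (fun ω => ε ω j) = (fun x : Fin n → ℝ => x j) ∘ ε := rfl
    rw [h1, ← Measure.map_map (measurable_pi_apply j) hε, hε_law]
    ext s hs
    rw [Measure.map_apply (measurable_pi_apply j) hs]
    have h2 : (fun x : Fin n → ℝ => x j) ⁻¹' s
        = Set.pi Set.univ (Function.update (fun _ => Set.univ) j s) := by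
      ext x
      simp [Function.update_apply]
    rw [h2, Measure.pi_pi]
    rw [Finset.prod_eq_single j]
    · simp
    · intro i _ hij
      simp [Function.update_apply, hij]
    · simp
  -- independence of the indicator and ε j
  have hind : IndepFun (fun ω => A.indicator (fun _ => (1 : ℝ)) ω) (fun ω => ε ω j) P :=
    h_indep.comp measurable_snd (measurable_pi_apply j)
  have hAeq : A = (fun ω => A.indicator (fun _ => (1 : ℝ)) ω) ⁻¹' {1} := by
    ext ω
    by_cases h : ω ∈ A <;> simp [Set.indicator_apply, h]
  -- conditional law on A of ε j is the full law
  have hrestr : Measure.map (fun ω => ε ω j) (P.restrict A)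
      = P A • Measure.map (fun ω => ε ω j) P := by
    ext s hs
    rw [Measure.map_apply hεj hs, Measure.restrict_apply (hεj hs), Measure.smul_apply,
      Measure.map_apply hεj hs, smul_eq_mul, Set.inter_comm, hAeq,
      hind.measure_inter_preimage_eq_mul _ _ (measurableSet_singleton 1) hs, ← hAeq]
  refine ⟨?_, ENNReal.toReal_pos hA_pos.ne' hPA_ne_top, ?_⟩
  · -- split P into restrict A + restrict Aᶜ
    have hsplit : Measure.map (fun ω => Z ω j) P
        = Measure.map (fun ω => Z ω j) (P.restrict A)
          + Measure.map (fun ω => Z ω j) (P.restrict Aᶜ) := by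
      conv_lhs => rw [show P = P.restrict A + P.restrict Aᶜ from (Measure.restrict_add_restrict_compl hA).symm]
      exact Measure.map_add _ _ hZj
    have hZε : (fun ω => Z ω j) =ᵐ[P.restrict A] fun ω => ε ω j := by
      filter_upwards [h_passive] with ω ⟨h1, h2⟩
      simp [hZ, h1, h2]
    have hZμ : (fun ω => Z ω j) =ᵐ[P.restrict Aᶜ] fun ω => μ (X ω) j := by
      filter_upwards [h_active] with ω h
      simp [hZ, h]
    rw [hsplit, Measure.map_congr hZε, Measure.map_congr hZμ, hrestr, hεj_law,
      Measure.map_smul, smul_smul, ENNReal.mul_inv_cancel hPAc_pos.ne' hPAc_ne_top, one_smul]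
  · rw [← ENNReal.toReal_one]
    exact (ENNReal.toReal_lt_toReal hPA_ne_top ENNReal.one_ne_top).mpr hA_lt
end
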